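/- For every string x of length n and all a, b, c: if (a, b+c) ∈ P_x^{ε} then (a + b + O(log n), c) ∈ P_x^{ε + O(log n)}. That is, the ε-strong profile of x satisfies the trade-off property: models witnessing strong-profile points can be split into smaller pieces while remaining strong. -/

import Mathlib

/-!
List the strings of length `n` in `A` in the order used to encode `A`, cut the list into
consecutive pieces of `2 ^ c'` strings, `c' = min c n`, and let `A'` be the piece containing `x`;
then `log₂ |A'| ≤ c`. Given `x`, a total program recovers `A'` from `A` and `c'`, since the
position of `x` in the list determines its piece: `CT(A'|x) ≤ CT(A|x) + O(log n)`. Without `x`,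
`A'` is computed from `A`, `n`, `c'` and the index of the piece, which is below `2 ^ (b + 1)`
because `|A| < 2 ^ (b + c + 1)` and the list has at most `2 ^ n` entries:
`C(A') ≤ C(A) + b + O(log n)`. Restricting to length `n` is what keeps `c' ≤ n`, so that `c'`
costs only `O(log n)` bits.
-/

open scoped Classical

abbrev BinStr := List Bool

/-- A decompressor: a partial computable map (program, condition) ↦ output. -/
def IsDecompressor (D : BinStr → BinStr → Part BinStr) : Prop := Partrec₂ D

/-- Conditional Kolmogorov complexity with respect to decompressor `D`. -/
noncomputable def Cc (D : BinStr → BinStr → Part BinStr) (x y : BinStr) : ℕ :=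
  sInf { n | ∃ p : BinStr, p.length = n ∧ x ∈ D p y }

/-- A decompressor is universal if every decompressor is simulated via a prefix. -/
def IsUniversal (U : BinStr → BinStr → Part BinStr) : Prop :=
  IsDecompressor U ∧ ∀ D, IsDecompressor D → ∃ c : BinStr, ∀ p y, D p y = U (c ++ p) y

/-- Unconditional complexity. -/
noncomputable def C (U : BinStr → BinStr → Part BinStr) (x : BinStr) : ℕ := Cc U x []

/-- The fixed computable encoding of a finite set of strings as a string. -/
def codeSet (A : Finset BinStr) : BinStr := Nat.bits (Encodable.encode A)

/-- Complexity of a finite set of strings. -/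
noncomputable def CSet (U : BinStr → BinStr → Part BinStr) (A : Finset BinStr) : ℕ :=
  C U (codeSet A)

/-- The profile of a string `x`. -/
noncomputable def profile (U : BinStr → BinStr → Part BinStr) (x : BinStr) : Set (ℕ × ℕ) :=
  { ml | ∃ A : Finset BinStr, x ∈ A ∧ CSet U A ≤ ml.1 ∧ Nat.log 2 A.card ≤ ml.2 }

/-- Total conditional complexity `CT(x|y)`: length of a shortest *total* program mapping y to x. -/
noncomputable def CT (U : BinStr → BinStr → Part BinStr) (x y : BinStr) : ℕ :=
  sInf { n | ∃ p : BinStr, p.length = n ∧ (∀ y' : BinStr, (U p y').Dom) ∧ x ∈ U p y }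

/-- The ε-strong profile of `x`. -/
noncomputable def strongProfile (U : BinStr → BinStr → Part BinStr) (ε : ℕ) (x : BinStr) :
    Set (ℕ × ℕ) :=
  { ml | ∃ A : Finset BinStr, x ∈ A ∧ CT U (codeSet A) x ≤ ε ∧
      CSet U A ≤ ml.1 ∧ Nat.log 2 A.card ≤ ml.2 }

/-- `Ω_m`: the number of strings of complexity at most m. -/
noncomputable def Omega (U : BinStr → BinStr → Part BinStr) (m : ℕ) : ℕ :=
  Set.ncard { x : BinStr | C U x ≤ m }

/-- The Finset of all binary strings of length n. -/
def allStr : ℕ → Finset BinStr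
  | 0 => {[]}
  | n + 1 => (allStr n).image (List.cons true) ∪ (allStr n).image (List.cons false)

/-- The cylinder `{ u ++ v : v ∈ {0,1}^m }`. -/
def cyl (u : BinStr) (m : ℕ) : Finset BinStr := (allStr m).image (fun v => u ++ v)

def ofBits (l : BinStr) : ℕ := l.foldr Nat.bit 0

@[simp]
theorem ofBits_bits (n : ℕ) : ofBits n.bits = n := by
  induction n using Nat.binaryRec' with
  | zero => simp [ofBits]
  | bit b n h ih => simp_all [ofBits, Nat.bits_append_bit _ _ h]

theorem Nat.bits_eq_cons {n : ℕ} (h : n ≠ 0) : n.bits = n.bodd :: (n / 2).bits := by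
  induction n using Nat.binaryRec' with
  | zero => contradiction
  | bit b n hb _ => simp [Nat.bits_append_bit _ _ hb, Nat.bodd_bit, Nat.bit_div_two]

theorem Primrec.nat_bit : Primrec₂ Nat.bit :=
  (Primrec.cond Primrec.fst (Primrec.nat_double_succ.comp Primrec.snd)
    (Primrec.nat_double.comp Primrec.snd)).of_eq fun p => by cases p.1 <;> rfl

theorem Primrec.ofBits : Primrec ofBits :=
  (Primrec.list_foldr Primrec.id (Primrec.const 0)
    (Primrec.nat_bit.comp (Primrec.fst.comp Primrec.snd) (Primrec.snd.comp Primrec.snd)).to₂).of_eq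
    fun _ => rfl

theorem Primrec.nat_bits : Primrec Nat.bits := by
  refine (Primrec.nat_strong_rec (fun (_ : Unit) n => n.bits)
    (g := fun _ l => some (if l.length = 0 then [] else l.length.bodd :: l.getD (l.length / 2) []))
    ?_ fun _ n => ?_).comp (Primrec.const ()) Primrec.id
  · have hlen : Primrec fun p : Unit × List BinStr => p.2.length :=
      Primrec.list_length.comp Primrec.snd
    refine Primrec.option_some.comp (Primrec.ite (Primrec.eq.comp hlen (Primrec.const 0))
      (Primrec.const []) (Primrec.list_cons.comp (Primrec.nat_bodd.comp hlen) ?_))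
    exact (Primrec.list_getD []).comp Primrec.snd (Primrec.nat_div.comp hlen (Primrec.const 2))
  · rcases Nat.eq_zero_or_pos n with rfl | hn
    · simp
    · simp [hn.ne', Nat.bits_eq_cons hn.ne', List.getD_eq_getElem?_getD, Nat.div_lt_self hn]

theorem Nat.size_pair_le (a b : ℕ) : (Nat.pair a b).size ≤ 2 * (max a b).size := by
  refine Nat.size_le.2 ((Nat.pair_lt_max_add_one_sq a b).trans_le ?_)
  rw [pow_mul']
  exact Nat.pow_le_pow_left (Nat.lt_size_self _) 2

theorem Nat.size_le_log_add_one (n : ℕ) : n.size ≤ Nat.log 2 n + 1 :=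
  Nat.size_le.2 (Nat.lt_pow_succ_log_self (by norm_num) n)

theorem Nat.div_two_pow_min_lt {j b c n : ℕ} (hjc : j < 2 ^ (b + c + 1)) (hjn : j < 2 ^ n) :
    j / 2 ^ min c n < 2 ^ (b + 1) := by
  rw [Nat.div_lt_iff_lt_mul (Nat.two_pow_pos _)]
  rcases le_total c n with h | h
  · rwa [min_eq_left h, ← pow_add, add_right_comm]
  · rw [min_eq_right h]
    exact hjn.trans_le (Nat.le_mul_of_pos_left _ (Nat.two_pow_pos _))

def selfDelimit (t : BinStr) : BinStr := List.replicate t.length true ++ false :: t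

def splitSelfDelimited (p : BinStr) : BinStr × BinStr :=
  ((p.drop (p.idxOf false + 1)).take (p.idxOf false), p.drop (2 * p.idxOf false + 1))

@[simp]
theorem length_selfDelimit (t : BinStr) : (selfDelimit t).length = 2 * t.length + 1 := by
  simp [selfDelimit]; ring

theorem splitSelfDelimited_selfDelimit_append (t r : BinStr) :
    splitSelfDelimited (selfDelimit t ++ r) = (t, r) := by
  have hidx : (selfDelimit t ++ r).idxOf false = t.length := by
    simp [selfDelimit, List.idxOf_append_of_notMem, List.idxOf_cons_self]
  have hdrop : (selfDelimit t ++ r).drop (t.length + 1) = t ++ r := by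
    rw [selfDelimit, List.append_assoc, List.cons_append, ← List.singleton_append,
      ← List.append_assoc, List.drop_left' (by simp)]
  rw [splitSelfDelimited, hidx, hdrop, two_mul, add_right_comm,
    ← List.drop_drop, hdrop, List.take_left, List.drop_left]

theorem Primrec.splitSelfDelimited : Primrec splitSelfDelimited := by
  have hk : Primrec fun p : BinStr => p.idxOf false :=
    Primrec.list_idxOf.comp (Primrec.const false) Primrec.id
  exact Primrec.pair
    (Primrec.list_take.comp hk (Primrec.list_drop.comp (Primrec.succ.comp hk) Primrec.id))
    (Primrec.list_drop.comp (Primrec.succ.comp (Primrec.nat_double.comp hk)) Primrec.id)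

/-- Only `h` and `u.length` are self-delimited, so the advice `u` itself costs just `|u|` bits. -/
def frame (h : ℕ) (u q : BinStr) : BinStr :=
  selfDelimit h.bits ++ selfDelimit u.length.bits ++ u ++ q

def unframe (p : BinStr) : ℕ × BinStr × BinStr :=
  let r := splitSelfDelimited (splitSelfDelimited p).2
  (ofBits (splitSelfDelimited p).1, r.2.take (ofBits r.1), r.2.drop (ofBits r.1))

@[simp]
theorem unframe_frame (h : ℕ) (u q : BinStr) : unframe (frame h u q) = (h, u, q) := by
  simp [unframe, frame, List.append_assoc, splitSelfDelimited_selfDelimit_append]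

theorem length_frame (h : ℕ) (u q : BinStr) :
    (frame h u q).length = q.length + u.length + 2 * h.size + 2 * u.length.size + 2 := by
  simp [frame, Nat.size_eq_bits_len]; ring

theorem Primrec.unframe : Primrec unframe := by
  have hr := Primrec.splitSelfDelimited.comp (Primrec.snd.comp Primrec.splitSelfDelimited)
  have hm := Primrec.ofBits.comp (Primrec.fst.comp hr)
  exact Primrec.pair (Primrec.ofBits.comp (Primrec.fst.comp Primrec.splitSelfDelimited))
    (Primrec.pair (Primrec.list_take.comp hm (Primrec.snd.comp hr))
      (Primrec.list_drop.comp hm (Primrec.snd.comp hr)))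

section Complexity

variable {U : BinStr → BinStr → Part BinStr}

theorem Cc_le_length {p s y : BinStr} (hs : s ∈ U p y) : Cc U s y ≤ p.length :=
  Nat.sInf_le ⟨p, rfl, hs⟩

theorem CT_le_length {p s y : BinStr} (htot : ∀ y', (U p y').Dom) (hs : s ∈ U p y) :
    CT U s y ≤ p.length :=
  Nat.sInf_le ⟨p, rfl, htot, hs⟩

theorem IsUniversal.exists_program_eq_const (hU : IsUniversal U) (s : BinStr) :
    ∃ p, ∀ y, U p y = Part.some s := by
  obtain ⟨c, hc⟩ := hU.2 (fun _ _ => Part.some s) (Partrec.const' _).to₂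
  exact ⟨c, fun y => by simpa using (hc [] y).symm⟩

theorem IsUniversal.exists_program_Cc (hU : IsUniversal U) (s y : BinStr) :
    ∃ p : BinStr, p.length = Cc U s y ∧ s ∈ U p y := by
  obtain ⟨p, hp⟩ := hU.exists_program_eq_const s
  exact Nat.sInf_mem (s := {n | ∃ p : BinStr, p.length = n ∧ s ∈ U p y})
    ⟨p.length, p, rfl, by simp [hp]⟩

theorem IsUniversal.exists_total_program_CT (hU : IsUniversal U) (s y : BinStr) :
    ∃ p : BinStr, p.length = CT U s y ∧ (∀ y', (U p y').Dom) ∧ s ∈ U p y := by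
  obtain ⟨p, hp⟩ := hU.exists_program_eq_const s
  exact Nat.sInf_mem (s := {n | ∃ p : BinStr, p.length = n ∧ (∀ y', (U p y').Dom) ∧ s ∈ U p y})
    ⟨p.length, p, rfl, by simp [hp], by simp [hp]⟩

def withAdvice (U : BinStr → BinStr → Part BinStr) (g : ℕ → BinStr → BinStr → BinStr → BinStr)
    (p y : BinStr) : Part BinStr :=
  (U (unframe p).2.2 y).map (g (unframe p).1 (unframe p).2.1 y)

theorem withAdvice_frame (g : ℕ → BinStr → BinStr → BinStr → BinStr) (h : ℕ) (u q y : BinStr) :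
    withAdvice U g (frame h u q) y = (U q y).map (g h u y) := by
  simp [withAdvice]

variable {g : ℕ → BinStr → BinStr → BinStr → BinStr}

theorem IsDecompressor.withAdvice (hU : IsDecompressor U)
    (hg : Computable fun z : (ℕ × BinStr) × BinStr × BinStr => g z.1.1 z.1.2 z.2.1 z.2.2) :
    IsDecompressor (withAdvice U g) := by
  have hun : Computable fun z : BinStr × BinStr => unframe z.1 :=
    Primrec.unframe.to_comp.comp Computable.fst
  have hargs : Computable fun z : (BinStr × BinStr) × BinStr =>
      (((unframe z.1.1).1, (unframe z.1.1).2.1), z.1.2, z.2) :=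
    ((Computable.fst.comp hun).pair ((Computable.fst.comp Computable.snd).comp hun)).comp
      Computable.fst |>.pair ((Computable.snd.comp Computable.fst).pair Computable.snd)
  exact Partrec.map (hU.comp ((Computable.snd.comp Computable.snd).comp hun) Computable.snd)
    (hg.comp hargs).to₂

theorem IsUniversal.exists_frame_simulation (hU : IsUniversal U)
    (hg : Computable fun z : (ℕ × BinStr) × BinStr × BinStr => g z.1.1 z.1.2 z.2.1 z.2.2) :
    ∃ c : BinStr, ∀ h u q y, U (c ++ frame h u q) y = (U q y).map (g h u y) := by
  obtain ⟨c, hc⟩ := hU.2 _ (hU.1.withAdvice hg)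
  exact ⟨c, fun h u q y => by rw [← hc, withAdvice_frame]⟩

theorem IsUniversal.exists_Cc_apply_le (hU : IsUniversal U)
    (hg : Computable fun z : (ℕ × BinStr) × BinStr × BinStr => g z.1.1 z.1.2 z.2.1 z.2.2) :
    ∃ k, ∀ h u y s,
      Cc U (g h u y s) y ≤ Cc U s y + u.length + 2 * h.size + 2 * u.length.size + k := by
  obtain ⟨c, hc⟩ := hU.exists_frame_simulation hg
  refine ⟨c.length + 2, fun h u y s => ?_⟩
  obtain ⟨q, hq, hs⟩ := hU.exists_program_Cc s y
  calc Cc U (g h u y s) y ≤ (c ++ frame h u q).length :=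
        Cc_le_length (by rw [hc]; exact Part.mem_map _ hs)
    _ = _ := by rw [List.length_append, length_frame, hq]; ring

theorem IsUniversal.exists_CT_apply_le (hU : IsUniversal U)
    (hg : Computable fun z : (ℕ × BinStr) × BinStr × BinStr => g z.1.1 z.1.2 z.2.1 z.2.2) :
    ∃ k, ∀ h u y s,
      CT U (g h u y s) y ≤ CT U s y + u.length + 2 * h.size + 2 * u.length.size + k := by
  obtain ⟨c, hc⟩ := hU.exists_frame_simulation hg
  refine ⟨c.length + 2, fun h u y s => ?_⟩
  obtain ⟨q, hq, htot, hs⟩ := hU.exists_total_program_CT s y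
  calc CT U (g h u y s) y ≤ (c ++ frame h u q).length :=
        CT_le_length (fun y' => by rw [hc]; exact htot y') (by rw [hc]; exact Part.mem_map _ hs)
    _ = _ := by rw [List.length_append, length_frame, hq]; ring

end Complexity

section Pieces

open Encodable

def chunk {α : Type*} (k i : ℕ) (l : List α) : List α := (l.drop (i * k)).take k

theorem length_chunk_le {α : Type*} (k i : ℕ) (l : List α) : (chunk k i l).length ≤ k :=
  List.length_take_le _ _

theorem chunk_sublist {α : Type*} (k i : ℕ) (l : List α) : (chunk k i l).Sublist l :=
  (List.take_sublist _ _).trans (List.drop_sublist _ _)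

theorem mem_chunk_idxOf_div {α : Type*} [BEq α] [LawfulBEq α] {l : List α} {x : α} {k : ℕ}
    (hx : x ∈ l) (hk : 0 < k) : x ∈ chunk k (l.idxOf x / k) l := by
  set j := l.idxOf x
  have hj : j < l.length := List.idxOf_lt_length_of_mem hx
  have hdiv : j / k * k + j % k = j := Nat.div_add_mod' j k
  have hmod : j % k < k := Nat.mod_lt j hk
  rw [chunk, List.mem_iff_getElem]
  refine ⟨j % k, by simp; omega, ?_⟩
  simp only [List.getElem_take, List.getElem_drop, hdiv]
  exact List.getElem_idxOf _

theorem Primrec.nat_two_pow : Primrec fun c : ℕ => 2 ^ c :=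
  (Primrec₂.unpaired'.1 Nat.Primrec.pow).comp (Primrec.const 2) Primrec.id

theorem Primrec.list_idxOf' {α : Type*} [Primcodable α] [DecidableEq α] [inst : BEq α]
    [LawfulBEq α] : Primrec₂ (List.idxOf : α → List α → ℕ) := by
  rw [lawful_beq_subsingleton inst instBEqOfDecidableEq]
  exact Primrec.list_idxOf

theorem Primrec.chunk {α β : Type*} [Primcodable α] [Primcodable β] {k i : β → ℕ}
    {l : β → List α} (hk : Primrec k) (hi : Primrec i) (hl : Primrec l) :
    Primrec fun b => chunk (k b) (i b) (l b) :=
  Primrec.list_take.comp hk (Primrec.list_drop.comp (Primrec.nat_mul.comp hi hk) hl)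

theorem Finset.card_le_card_pow_of_forall_length_eq {α : Type*} [Fintype α] {S : Finset (List α)}
    {n : ℕ} (hS : ∀ z ∈ S, z.length = n) : S.card ≤ Fintype.card α ^ n := by
  calc S.card = (S.subtype fun z => z.length = n).card := by
        rw [Finset.card_subtype, Finset.filter_true_of_mem hS]
    _ ≤ Fintype.card (List.Vector α n) := Finset.card_le_univ (α := List.Vector α n) _
    _ = Fintype.card α ^ n := card_vector n

/-- The order in which `Finset.encodable` lists the elements of a set. -/
def encLE (a b : BinStr) : Prop := encode a ≤ encode b

instance : DecidableRel encLE := fun _ _ => Nat.decLe _ _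
instance : IsTrans BinStr encLE := ⟨fun _ _ _ => Nat.le_trans⟩
instance : Std.Antisymm encLE := ⟨fun _ _ h h' => encode_injective (Nat.le_antisymm h h')⟩
instance : Std.Total encLE := ⟨fun _ _ => Nat.le_total _ _⟩

theorem encode_finset_eq_encode_sort (A : Finset BinStr) : encode A = encode (A.sort encLE) :=
  rfl

theorem codeSet_toFinset {l : List BinStr} (hnd : l.Nodup) (hl : l.Pairwise encLE) :
    codeSet l.toFinset = (encode l).bits := by
  rw [codeSet, encode_finset_eq_encode_sort, (List.toFinset_sort encLE hnd).2 hl]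

def layer (A : Finset BinStr) (n : ℕ) : List BinStr := (A.sort encLE).filter (·.length = n)

theorem mem_layer {A : Finset BinStr} {n : ℕ} {x : BinStr} :
    x ∈ layer A n ↔ x ∈ A ∧ x.length = n := by
  simp [layer]

theorem layer_nodup (A : Finset BinStr) (n : ℕ) : (layer A n).Nodup :=
  (A.sort_nodup encLE).filter _

theorem layer_pairwise (A : Finset BinStr) (n : ℕ) : (layer A n).Pairwise encLE :=
  (A.pairwise_sort encLE).filter _

theorem length_layer_le_card (A : Finset BinStr) (n : ℕ) : (layer A n).length ≤ A.card :=
  (List.length_filter_le _ _).trans (A.length_sort encLE).le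

theorem length_layer_le_two_pow (A : Finset BinStr) (n : ℕ) : (layer A n).length ≤ 2 ^ n := by
  rw [← List.toFinset_card_of_nodup (layer_nodup A n)]
  simpa using Finset.card_le_card_pow_of_forall_length_eq fun z hz =>
    (mem_layer.1 (List.mem_toFinset.1 hz)).2

def layerOfCode (n : ℕ) (s : BinStr) : List BinStr :=
  ((decode (ofBits s)).getD []).filter (·.length = n)

theorem layerOfCode_codeSet (A : Finset BinStr) (n : ℕ) :
    layerOfCode n (codeSet A) = layer A n := by
  simp [layerOfCode, layer, codeSet, encode_finset_eq_encode_sort]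

theorem Primrec₂.layerOfCode : Primrec₂ layerOfCode := by
  have hlist : Primrec fun s : BinStr => (decode (ofBits s) : Option (List BinStr)).getD [] :=
    Primrec.option_getD.comp (Primrec.decode.comp Primrec.ofBits) (Primrec.const [])
  exact (PrimrecRel.listFilter (PrimrecRel.comp₂ Primrec.eq
    (Primrec.list_length.comp₂ Primrec₂.left) Primrec₂.right)).comp (hlist.comp Primrec.snd)
    Primrec.fst

def piece (A : Finset BinStr) (n c i : ℕ) : Finset BinStr := (chunk (2 ^ c) i (layer A n)).toFinset

def pieceIdx (A : Finset BinStr) (n c : ℕ) (x : BinStr) : ℕ := (layer A n).idxOf x / 2 ^ c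

theorem mem_piece_pieceIdx {A : Finset BinStr} {x : BinStr} (hx : x ∈ A) (c : ℕ) :
    x ∈ piece A x.length c (pieceIdx A x.length c x) := by
  unfold pieceIdx
  exact List.mem_toFinset.2 (mem_chunk_idxOf_div (mem_layer.2 ⟨hx, rfl⟩) (Nat.two_pow_pos c))

theorem log_card_piece_le (A : Finset BinStr) (n c i : ℕ) : Nat.log 2 (piece A n c i).card ≤ c :=
  calc Nat.log 2 (piece A n c i).card ≤ Nat.log 2 (2 ^ c) :=
        Nat.log_mono_right ((List.toFinset_card_le _).trans (length_chunk_le _ _ _))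
    _ = c := Nat.log_pow (by norm_num) c

theorem pieceIdx_lt_two_pow_length {A : Finset BinStr} {x : BinStr} (hx : x ∈ A) (c : ℕ) :
    pieceIdx A x.length c x < 2 ^ x.length :=
  (Nat.div_le_self _ _).trans_lt <| (List.idxOf_lt_length_of_mem (mem_layer.2 ⟨hx, rfl⟩)).trans_le
    (length_layer_le_two_pow A _)

theorem pieceIdx_lt_two_pow_succ {A : Finset BinStr} {x : BinStr} {b c : ℕ} (hx : x ∈ A)
    (hA : Nat.log 2 A.card ≤ b + c) : pieceIdx A x.length (min c x.length) x < 2 ^ (b + 1) := by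
  have hj := List.idxOf_lt_length_of_mem (mem_layer.2 ⟨hx, rfl⟩)
  have hcard : A.card < 2 ^ (b + c + 1) := (Nat.lt_pow_succ_log_self (by norm_num) _).trans_le
    (Nat.pow_le_pow_right (by norm_num) (by omega))
  exact Nat.div_two_pow_min_lt ((hj.trans_le (length_layer_le_card A _)).trans hcard)
    (hj.trans_le (length_layer_le_two_pow A _))

def pieceCode (n c i : ℕ) (s : BinStr) : BinStr := (encode (chunk (2 ^ c) i (layerOfCode n s))).bits

theorem codeSet_piece (A : Finset BinStr) (n c i : ℕ) :
    codeSet (piece A n c i) = pieceCode n c i (codeSet A) := by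
  rw [piece, pieceCode, layerOfCode_codeSet]
  exact codeSet_toFinset ((layer_nodup A n).sublist (chunk_sublist _ _ _))
    ((layer_pairwise A n).sublist (chunk_sublist _ _ _))

theorem Primrec.pieceCode {β : Type*} [Primcodable β] {n c i : β → ℕ} {s : β → BinStr}
    (hn : Primrec n) (hc : Primrec c) (hi : Primrec i) (hs : Primrec s) :
    Primrec fun b => pieceCode (n b) (c b) (i b) (s b) :=
  Primrec.nat_bits.comp (Primrec.encode.comp (Primrec.chunk
    (Primrec.nat_two_pow.comp hc) hi
    (Primrec₂.layerOfCode.comp hn hs)))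

end Pieces

section PieceComplexity

variable {U : BinStr → BinStr → Part BinStr}

theorem IsUniversal.exists_CT_piece_le (hU : IsUniversal U) :
    ∃ k, ∀ (A : Finset BinStr) (x : BinStr) (c : ℕ),
      CT U (codeSet (piece A x.length c (pieceIdx A x.length c x))) x ≤
        CT U (codeSet A) x + 2 * c.size + k := by
  have hn : Primrec fun z : (ℕ × BinStr) × BinStr × BinStr => z.2.1.length :=
    Primrec.list_length.comp (Primrec.fst.comp Primrec.snd)
  have hc : Primrec fun z : (ℕ × BinStr) × BinStr × BinStr => z.1.1 :=
    Primrec.fst.comp Primrec.fst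
  have hs : Primrec fun z : (ℕ × BinStr) × BinStr × BinStr => z.2.2 :=
    Primrec.snd.comp Primrec.snd
  have hidx : Primrec fun z : (ℕ × BinStr) × BinStr × BinStr =>
      (layerOfCode z.2.1.length z.2.2).idxOf z.2.1 / 2 ^ z.1.1 :=
    Primrec.nat_div.comp (Primrec.list_idxOf'.comp (Primrec.fst.comp Primrec.snd)
      (Primrec₂.layerOfCode.comp hn hs)) (Primrec.nat_two_pow.comp hc)
  obtain ⟨k, hk⟩ := hU.exists_CT_apply_le
    (g := fun c _ y s => pieceCode y.length c ((layerOfCode y.length s).idxOf y / 2 ^ c) s)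
    (Primrec.pieceCode hn hc hidx hs).to_comp
  refine ⟨k, fun A x c => ?_⟩
  simpa [codeSet_piece, pieceIdx, layerOfCode_codeSet] using hk c [] x (codeSet A)

theorem IsUniversal.exists_CSet_piece_le (hU : IsUniversal U) :
    ∃ k, ∀ (A : Finset BinStr) (n c i : ℕ),
      CSet U (piece A n c i) ≤
        CSet U A + i.size + 2 * (Nat.pair n c).size + 2 * i.size.size + k := by
  have hh : Primrec fun z : (ℕ × BinStr) × BinStr × BinStr => z.1.1.unpair :=
    Primrec.unpair.comp (Primrec.fst.comp Primrec.fst)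
  have hg := Primrec.pieceCode (Primrec.fst.comp hh) (Primrec.snd.comp hh)
    (Primrec.ofBits.comp (Primrec.snd.comp Primrec.fst)) (Primrec.snd.comp Primrec.snd)
  obtain ⟨k, hk⟩ := hU.exists_Cc_apply_le
    (g := fun h u _ s => pieceCode h.unpair.1 h.unpair.2 (ofBits u) s) hg.to_comp
  refine ⟨k, fun A n c i => ?_⟩
  simpa [CSet, C, codeSet_piece, Nat.size_eq_bits_len] using hk (Nat.pair n c) i.bits [] (codeSet A)

end PieceComplexity

/-- trade-off for the ε-strong profile:
(a, b+c) ∈ P_x^ε implies (a + b + O(log n), c) ∈ P_x^{ε+O(log n)}. -/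
theorem strong_profile_tradeoff
    (U : BinStr → BinStr → Part BinStr) (hU : IsUniversal U) :
    ∃ d : ℕ, ∀ (x : BinStr) (n a b c ε : ℕ), x.length = n →
      (a, b + c) ∈ strongProfile U ε x →
      (a + b + d * (Nat.log 2 n + 1), c) ∈ strongProfile U (ε + d * (Nat.log 2 n + 1)) x := by
  obtain ⟨kT, hT⟩ := hU.exists_CT_piece_le
  obtain ⟨kC, hC⟩ := hU.exists_CSet_piece_le
  refine ⟨kT + kC + 7, ?_⟩
  rintro x n a b c ε rfl ⟨A, hxA, hCT, hCA, hcard⟩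
  set L := Nat.log 2 x.length
  set c' := min c x.length
  set i := pieceIdx A x.length c' x
  have hn : x.length.size ≤ L + 1 := Nat.size_le_log_add_one _
  have hc' : c'.size ≤ L + 1 := (Nat.size_le_size (min_le_right _ _)).trans hn
  have hpair : (Nat.pair x.length c').size ≤ 2 * (L + 1) :=
    (Nat.size_pair_le _ _).trans (by rw [max_eq_left (min_le_right _ _)]; omega)
  have hib : i.size ≤ b + 1 := Nat.size_le.2 (pieceIdx_lt_two_pow_succ hxA hcard)
  have hii : i.size.size ≤ L + 1 :=
    (Nat.size_le_size (Nat.size_le.2 (pieceIdx_lt_two_pow_length hxA c'))).trans hn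
  have hd : (kT + kC + 7) * (L + 1) = kT * (L + 1) + kC * (L + 1) + 7 * (L + 1) := by ring
  have hkT : kT ≤ kT * (L + 1) := Nat.le_mul_of_pos_right _ L.succ_pos
  have hkC : kC ≤ kC * (L + 1) := Nat.le_mul_of_pos_right _ L.succ_pos
  refine ⟨piece A x.length c' i, mem_piece_pieceIdx hxA c', ?_, ?_,
    (log_card_piece_le _ _ _ _).trans (min_le_left _ _)⟩
  · have : CT U (codeSet (piece A x.length c' i)) x ≤ _ := hT A x c'
    omega
  · have := hC A x.length c' i
    omega
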